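/- Let P be a labeled protein tree with at least one Creat node, and let w be a lowest Creat node with children w_l, w_r. Then L(P[w_l]) and L(P[w_r]) are each creation-free, and every inclusion-wise maximum creation-free subtree of P containing a leaf of P[w_l] contains all leaves of P[w_l]. -/
import Mathlib


inductive BTree (α : Type) : Type
  | leaf : α → BTree α
  | node : BTree α → BTree α → BTree α
deriving DecidableEq

namespace BTree

variable {α β : Type} [DecidableEq α] [DecidableEq β]

/-- The set of leaf labels of a tree. -/
def leaves : BTree α → Finset α
  | leaf a => {a}
  | node l r => leaves l ∪ leaves r

/-- Number of leaves. -/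
def leafCount : BTree α → ℕ
  | leaf _ => 1
  | node l r => leafCount l + leafCount r

/-- Number of internal nodes. -/
def internalCount : BTree α → ℕ
  | leaf _ => 0
  | node l r => internalCount l + internalCount r + 1

/-- The nodes of a tree, identified with the subtrees they root. -/
def nodes : BTree α → List (BTree α)
  | leaf a => [leaf a]
  | node l r => node l r :: (nodes l ++ nodes r)

/-- `Anc t u` : `u` is a node of (the subtree rooted at) `t`,
i.e. `t` is an ancestor of `u` (possibly `t = u`). -/
def Anc (t u : BTree α) : Prop := u ∈ nodes t

/-- All leaf labels are pairwise distinct. -/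
def distinctLeaves : BTree α → Prop
  | leaf _ => True
  | node l r => Disjoint (leaves l) (leaves r) ∧ distinctLeaves l ∧ distinctLeaves r

/-- The (subtree rooted at the) lowest common ancestor of a set `L` of leaf labels. -/
def lca : BTree α → Finset α → BTree α
  | leaf a, _ => leaf a
  | node l r, L =>
    if L ⊆ leaves l then lca l L
    else if L ⊆ leaves r then lca r L
    else node l r

/-- LCA-extension of a leaf map `s : α → β` : the image in the lower tree `S` of a node
`x` of the upper tree, namely the lca in `S` of the images of the leaves below `x`. -/
def mapLca (S : BTree β) (s : α → β) (x : BTree α) : BTree β :=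
  lca S ((leaves x).image s)

/-- Depth of the node `u` below the node `t` (number of edges on the path). -/
def depthOf : BTree α → BTree α → ℕ
  | leaf _, _ => 0
  | node l r, u =>
    if node l r = u then 0
    else if u ∈ nodes l then depthOf l u + 1 else depthOf r u + 1

inductive GLabel : Type
  | Spec | Dup
deriving DecidableEq

/-- LCA-reconciliation labeling of the nodes of a gene tree with respect to
a species tree `S` (internal nodes only; leaves get the dummy label `Spec`). -/
def glab (S : BTree β) (s : α → β) : BTree α → GLabel
  | leaf _ => GLabel.Spec
  | node l r =>
    if mapLca S s (node l r) ≠ mapLca S s l ∧ mapLca S s (node l r) ≠ mapLca S s r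
    then GLabel.Spec else GLabel.Dup

/-- Duplication cost `D(G,S)` : number of internal nodes labeled `Dup`. -/
def dupCost (S : BTree β) (s : α → β) : BTree α → ℕ
  | leaf _ => 0
  | node l r =>
    (if glab S s (node l r) = GLabel.Dup then 1 else 0) + dupCost S s l + dupCost S s r

/-- Losses induced on the edge from `x` to its child `y`. -/
def lossEdge (S : BTree β) (s : α → β) (x y : BTree α) : ℕ :=
  if mapLca S s x = mapLca S s y then 0
  else (depthOf (mapLca S s x) (mapLca S s y) - 1) +
    (if glab S s x = GLabel.Dup then 1 else 0)

/-- Loss cost `L(G,S)` : total number of losses induced on the edges of `G`. -/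
def lossCost (S : BTree β) (s : α → β) : BTree α → ℕ
  | leaf _ => 0
  | node l r =>
    lossEdge S s (node l r) l + lossEdge S s (node l r) r + lossCost S s l + lossCost S s r

inductive PLabel : Type
  | Spec | Dup | Creat
deriving DecidableEq

/-- LCA-reconciliation labeling of the nodes of a protein tree `P` with respect to a
gene tree `G` (with its own labeling `lG`); leaves get the dummy label `Creat`. -/
def plab (G : BTree β) (g : α → β) (lG : BTree β → GLabel) : BTree α → PLabel
  | leaf _ => PLabel.Creat
  | node l r =>
    if mapLca G g (node l r) ≠ mapLca G g l ∧ mapLca G g (node l r) ≠ mapLca G g r then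
      (match lG (mapLca G g (node l r)) with
        | GLabel.Spec => PLabel.Spec
        | GLabel.Dup => PLabel.Dup)
    else PLabel.Creat

/-- Creation cost `C(P,G)` : number of internal nodes of `P` labeled `Creat`. -/
def creatCost (G : BTree β) (g : α → β) (lG : BTree β → GLabel) : BTree α → ℕ
  | leaf _ => 0
  | node l r =>
    (if plab G g lG (node l r) = PLabel.Creat then 1 else 0) +
      creatCost G g lG l + creatCost G g lG r

/-- Protein losses induced on the edge from `x` to its child `y`. -/
def plossEdge (G : BTree β) (g : α → β) (lG : BTree β → GLabel) (x y : BTree α) : ℕ :=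
  if mapLca G g x = mapLca G g y then 0
  else (depthOf (mapLca G g x) (mapLca G g y) - 1) +
    (if plab G g lG x = PLabel.Creat then 1 else 0)

/-- Protein loss cost `L(P,G)`. -/
def plossCost (G : BTree β) (g : α → β) (lG : BTree β → GLabel) : BTree α → ℕ
  | leaf _ => 0
  | node l r =>
    plossEdge G g lG (node l r) l + plossEdge G g lG (node l r) r +
      plossCost G g lG l + plossCost G g lG r

/-- Relabel the leaves of a tree via `f` (e.g. `g(P)`). -/
def relabel (f : α → β) : BTree α → BTree β
  | leaf a => leaf (f a)
  | node l r => node (relabel f l) (relabel f r)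

end BTree

namespace BTree
variable {α : Type} [DecidableEq α]

/-- `L` is a creation-free leaf set of `P` (w.r.t. the labeling `l`): the lca in `P`
of any two distinct members of `L` is not labeled `Creat`. -/
def CFree (P : BTree α) (l : BTree α → PLabel) (L : Finset α) : Prop :=
  L ⊆ P.leaves ∧ ∀ x ∈ L, ∀ y ∈ L, x ≠ y → l (P.lca {x, y}) ≠ PLabel.Creat

/-- `L` is an inclusion-wise maximal creation-free leaf set of `P`. -/
def MaxCFree (P : BTree α) (l : BTree α → PLabel) (L : Finset α) : Prop :=
  CFree P l L ∧ ∀ L' : Finset α, CFree P l L' → L ⊆ L' → L' = L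

end BTree

namespace BTree
variable {α : Type} [DecidableEq α]

theorem self_mem_nodes (t : BTree α) : t ∈ t.nodes := by
  cases t <;> simp [nodes]

theorem leaves_subset_of_mem {t u : BTree α} (h : u ∈ t.nodes) : u.leaves ⊆ t.leaves := by
  induction t with
  | leaf a => simp [nodes] at h; subst h; exact subset_rfl
  | node l r ihl ihr =>
    simp only [nodes, List.mem_cons, List.mem_append] at h
    rcases h with h | h | h
    · subst h; exact subset_rfl
    · exact (ihl h).trans Finset.subset_union_left
    · exact (ihr h).trans Finset.subset_union_right

theorem nodes_trans {s t u : BTree α} (h1 : u ∈ t.nodes) (h2 : t ∈ s.nodes) :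
    u ∈ s.nodes := by
  induction s with
  | leaf a =>
    simp [nodes] at h2; subst h2; exact h1
  | node l r ihl ihr =>
    simp only [nodes, List.mem_cons, List.mem_append] at h2 ⊢
    rcases h2 with h2 | h2 | h2
    · subst h2
      simpa only [nodes, List.mem_cons, List.mem_append] using h1
    · exact Or.inr (Or.inl (ihl h2))
    · exact Or.inr (Or.inr (ihr h2))

theorem distinct_of_mem {P t : BTree α} (h : t ∈ P.nodes) (hP : P.distinctLeaves) :
    t.distinctLeaves := by
  induction P with
  | leaf a => simp [nodes] at h; subst h; trivial
  | node l r ihl ihr =>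
    simp only [nodes, List.mem_cons, List.mem_append] at h
    rcases h with h | h | h
    · subst h; exact hP
    · exact ihl h hP.2.1
    · exact ihr h hP.2.2

theorem lca_eq_of_subset {P w : BTree α} (hP : P.distinctLeaves) (hw : w ∈ P.nodes)
    {L : Finset α} (hL : L ⊆ w.leaves) (hne : L.Nonempty) : P.lca L = w.lca L := by
  induction P with
  | leaf a => simp [nodes] at hw; subst hw; rfl
  | node l r ihl ihr =>
    simp only [nodes, List.mem_cons, List.mem_append] at hw
    rcases hw with hw | hw | hw
    · subst hw; rfl
    · have hl : L ⊆ l.leaves := hL.trans (leaves_subset_of_mem hw)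
      rw [show (node l r).lca L = l.lca L from if_pos hl]
      exact ihl hP.2.1 hw
    · have hr : L ⊆ r.leaves := hL.trans (leaves_subset_of_mem hw)
      have hnl : ¬ L ⊆ l.leaves := by
        intro hl
        obtain ⟨x, hx⟩ := hne
        exact (Finset.disjoint_left.mp hP.1) (hl hx) (hr hx)
      rw [show (node l r).lca L = if L ⊆ r.leaves then r.lca L else node l r from
        if_neg hnl, if_pos hr]
      exact ihr hP.2.2 hw

theorem lca_pair_internal {t : BTree α} {x y : α} (hx : x ∈ t.leaves) (hy : y ∈ t.leaves)
    (hxy : x ≠ y) : ∃ a b, t.lca {x, y} = node a b ∧ node a b ∈ t.nodes := by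
  induction t with
  | leaf a =>
    simp [leaves] at hx hy; exact absurd (hx.trans hy.symm) hxy
  | node l r ihl ihr =>
    by_cases h1 : ({x, y} : Finset α) ⊆ l.leaves
    · rw [show (node l r).lca {x, y} = l.lca {x, y} from if_pos h1]
      obtain ⟨a, b, he, hm⟩ := ihl (h1 (by simp)) (h1 (by simp))
      exact ⟨a, b, he, nodes_trans hm (by
        simp only [nodes, List.mem_cons, List.mem_append]
        exact Or.inr (Or.inl (self_mem_nodes l)))⟩
    · by_cases h2 : ({x, y} : Finset α) ⊆ r.leaves
      · rw [show (node l r).lca {x, y} = r.lca {x, y} from by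
          rw [show (node l r).lca {x, y}
            = if ({x, y} : Finset α) ⊆ r.leaves then r.lca {x, y} else node l r from
            if_neg h1, if_pos h2]]
        obtain ⟨a, b, he, hm⟩ := ihr (h2 (by simp)) (h2 (by simp))
        exact ⟨a, b, he, nodes_trans hm (by
          simp only [nodes, List.mem_cons, List.mem_append]
          exact Or.inr (Or.inr (self_mem_nodes r)))⟩
      · refine ⟨l, r, ?_, self_mem_nodes _⟩
        rw [show (node l r).lca {x, y}
          = if ({x, y} : Finset α) ⊆ r.leaves then r.lca {x, y} else node l r from
          if_neg h1, if_neg h2]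

theorem lca_cross {P wl wr : BTree α} (hP : P.distinctLeaves)
    (hmem : node wl wr ∈ P.nodes) {x y : α} (hx : x ∈ wl.leaves) (hy : y ∈ wr.leaves) :
    P.lca {x, y} = node wl wr := by
  have hd := distinct_of_mem hmem hP
  have hsub : ({x, y} : Finset α) ⊆ (node wl wr).leaves := by
    simp only [Finset.insert_subset_iff, Finset.singleton_subset_iff, leaves,
      Finset.mem_union]
    exact ⟨Or.inl hx, Or.inr hy⟩
  rw [lca_eq_of_subset hP hmem hsub ⟨x, by simp⟩]
  have hnl : ¬ ({x, y} : Finset α) ⊆ wl.leaves := by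
    intro h
    exact (Finset.disjoint_left.mp hd.1) (h (by simp)) hy
  have hnr : ¬ ({x, y} : Finset α) ⊆ wr.leaves := by
    intro h
    exact (Finset.disjoint_left.mp hd.1) hx (h (by simp))
  rw [show (node wl wr).lca {x, y}
    = if ({x, y} : Finset α) ⊆ wr.leaves then wr.lca {x, y} else node wl wr from
    if_neg hnl, if_neg hnr]

theorem lca_outside {P w : BTree α} (hP : P.distinctLeaves) (hw : w ∈ P.nodes)
    {x y y' : α} (hx : x ∈ P.leaves) (hxw : x ∉ w.leaves)
    (hy : y ∈ w.leaves) (hy' : y' ∈ w.leaves) : P.lca {x, y} = P.lca {x, y'} := by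
  induction P with
  | leaf a =>
    simp [nodes] at hw; subst hw; exact absurd hx hxw
  | node l r ihl ihr =>
    simp only [nodes, List.mem_cons, List.mem_append] at hw
    rcases hw with hw | hw | hw
    · subst hw; exact absurd hx hxw
    · have hyl : y ∈ l.leaves := leaves_subset_of_mem hw hy
      have hy'l : y' ∈ l.leaves := leaves_subset_of_mem hw hy'
      by_cases hxl : x ∈ l.leaves
      · have h1 : ({x, y} : Finset α) ⊆ l.leaves := by
          simp [Finset.insert_subset_iff, hxl, hyl]
        have h2 : ({x, y'} : Finset α) ⊆ l.leaves := by
          simp [Finset.insert_subset_iff, hxl, hy'l]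
        rw [show (node l r).lca {x, y} = l.lca {x, y} from if_pos h1,
          show (node l r).lca {x, y'} = l.lca {x, y'} from if_pos h2]
        exact ihl hP.2.1 hw hxl
      · have hynr : y ∉ r.leaves := Finset.disjoint_left.mp hP.1 hyl
        have hy'nr : y' ∉ r.leaves := Finset.disjoint_left.mp hP.1 hy'l
        have h1 : ¬ ({x, y} : Finset α) ⊆ l.leaves := fun h => hxl (h (by simp))
        have h2 : ¬ ({x, y'} : Finset α) ⊆ l.leaves := fun h => hxl (h (by simp))
        have h3 : ¬ ({x, y} : Finset α) ⊆ r.leaves := fun h => hynr (h (by simp))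
        have h4 : ¬ ({x, y'} : Finset α) ⊆ r.leaves := fun h => hy'nr (h (by simp))
        rw [show (node l r).lca {x, y}
          = if ({x, y} : Finset α) ⊆ r.leaves then r.lca {x, y} else node l r from
          if_neg h1, if_neg h3,
          show (node l r).lca {x, y'}
          = if ({x, y'} : Finset α) ⊆ r.leaves then r.lca {x, y'} else node l r from
          if_neg h2, if_neg h4]
    · have hyr : y ∈ r.leaves := leaves_subset_of_mem hw hy
      have hy'r : y' ∈ r.leaves := leaves_subset_of_mem hw hy'
      have hynl : y ∉ l.leaves := Finset.disjoint_right.mp hP.1 hyr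
      have hy'nl : y' ∉ l.leaves := Finset.disjoint_right.mp hP.1 hy'r
      have h1 : ¬ ({x, y} : Finset α) ⊆ l.leaves := fun h => hynl (h (by simp))
      have h2 : ¬ ({x, y'} : Finset α) ⊆ l.leaves := fun h => hy'nl (h (by simp))
      by_cases hxr : x ∈ r.leaves
      · have h3 : ({x, y} : Finset α) ⊆ r.leaves := by
          simp [Finset.insert_subset_iff, hxr, hyr]
        have h4 : ({x, y'} : Finset α) ⊆ r.leaves := by
          simp [Finset.insert_subset_iff, hxr, hy'r]
        rw [show (node l r).lca {x, y}
          = if ({x, y} : Finset α) ⊆ r.leaves then r.lca {x, y} else node l r from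
          if_neg h1, if_pos h3,
          show (node l r).lca {x, y'}
          = if ({x, y'} : Finset α) ⊆ r.leaves then r.lca {x, y'} else node l r from
          if_neg h2, if_pos h4]
        exact ihr hP.2.2 hw hxr
      · have h3 : ¬ ({x, y} : Finset α) ⊆ r.leaves := fun h => hxr (h (by simp))
        have h4 : ¬ ({x, y'} : Finset α) ⊆ r.leaves := fun h => hxr (h (by simp))
        rw [show (node l r).lca {x, y}
          = if ({x, y} : Finset α) ⊆ r.leaves then r.lca {x, y} else node l r from
          if_neg h1, if_neg h3,
          show (node l r).lca {x, y'}
          = if ({x, y'} : Finset α) ⊆ r.leaves then r.lca {x, y'} else node l r from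
          if_neg h2, if_neg h4]

end BTree

open BTree in
/-- if `w = node wl wr` is a lowest `Creat` node of `P`, then the leaf
sets of `P[w_l]` and `P[w_r]` are each creation-free, and every inclusion-wise maximal
creation-free leaf set of `P` containing a leaf of `P[w_l]` contains all leaves of
`P[w_l]`. -/
theorem stmt16 {α : Type} [DecidableEq α] (P : BTree α) (l : BTree α → BTree.PLabel)
    (hP : P.distinctLeaves)
    (wl wr : BTree α) (hmem : BTree.node wl wr ∈ P.nodes)
    (hcreat : l (BTree.node wl wr) = PLabel.Creat)
    (hlow : ∀ u : BTree α, (u ∈ wl.nodes ∨ u ∈ wr.nodes) →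
      ∀ ul ur : BTree α, u = BTree.node ul ur → l u ≠ PLabel.Creat) :
    CFree P l wl.leaves ∧ CFree P l wr.leaves ∧
      ∀ M : Finset α, MaxCFree P l M → (M ∩ wl.leaves).Nonempty →
        wl.leaves ⊆ M := by
  have hwl : wl ∈ P.nodes := nodes_trans (by
    simp only [BTree.nodes, List.mem_cons, List.mem_append]
    exact Or.inr (Or.inl (self_mem_nodes wl))) hmem
  have hwr : wr ∈ P.nodes := nodes_trans (by
    simp only [BTree.nodes, List.mem_cons, List.mem_append]
    exact Or.inr (Or.inr (self_mem_nodes wr))) hmem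
  have hdw := distinct_of_mem hmem hP
  have cfree_side : ∀ (w : BTree α), w ∈ P.nodes →
      (∀ u ∈ w.nodes, ∀ ul ur : BTree α, u = BTree.node ul ur → l u ≠ PLabel.Creat) →
      CFree P l w.leaves := by
    intro w hw hl
    refine ⟨leaves_subset_of_mem hw, ?_⟩
    intro x hx y hy hxy
    rw [lca_eq_of_subset hP hw (by simp [Finset.insert_subset_iff, hx, hy]) ⟨x, by simp⟩]
    obtain ⟨a, b, he, hm⟩ := lca_pair_internal hx hy hxy
    rw [he]
    exact hl _ hm a b rfl
  have part1 : CFree P l wl.leaves :=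
    cfree_side wl hwl (fun u hu => hlow u (Or.inl hu))
  have part2 : CFree P l wr.leaves :=
    cfree_side wr hwr (fun u hu => hlow u (Or.inr hu))
  refine ⟨part1, part2, ?_⟩
  rintro M ⟨hMcf, hmax⟩ ⟨a, ha⟩
  rw [Finset.mem_inter] at ha
  obtain ⟨haM, haw⟩ := ha
  have key : ∀ x ∈ M, ∀ y ∈ wl.leaves, x ≠ y → l (P.lca {x, y}) ≠ PLabel.Creat := by
    intro x hxM y hyw hxy
    by_cases hxw : x ∈ wl.leaves
    · exact part1.2 x hxw y hyw hxy
    · by_cases hxr : x ∈ wr.leaves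
      · have hax : a ≠ x := fun h =>
          Finset.disjoint_left.mp hdw.1 haw (h ▸ hxr)
        have := hMcf.2 a haM x hxM hax
        rw [lca_cross hP hmem haw hxr] at this
        exact (this hcreat).elim
      · have hxa : x ≠ a := fun h => hxw (h ▸ haw)
        have hxnw : x ∉ (BTree.node wl wr).leaves := by
          simp only [BTree.leaves, Finset.mem_union]
          exact fun h => h.elim hxw hxr
        have heq := lca_outside hP hmem (hMcf.1 hxM) hxnw
          (show y ∈ (BTree.node wl wr).leaves by
            simp only [BTree.leaves, Finset.mem_union]; exact Or.inl hyw)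
          (show a ∈ (BTree.node wl wr).leaves by
            simp only [BTree.leaves, Finset.mem_union]; exact Or.inl haw)
        rw [heq]
        exact hMcf.2 x hxM a haM hxa
  have hcf : CFree P l (M ∪ wl.leaves) := by
    refine ⟨Finset.union_subset hMcf.1 (leaves_subset_of_mem hwl), ?_⟩
    intro x hx y hy hxy
    rw [Finset.mem_union] at hx hy
    rcases hx with hx | hx
    · rcases hy with hy | hy
      · exact hMcf.2 x hx y hy hxy
      · exact key x hx y hy hxy
    · rcases hy with hy | hy
      · rw [Finset.pair_comm]
        exact key y hy x hx hxy.symm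
      · exact part1.2 x hx y hy hxy
  have := hmax _ hcf Finset.subset_union_left
  intro b hb
  rw [← this]
  exact Finset.mem_union_right _ hb
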